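/- Let G = (μ,V,W,E,P,f,g) be a maximal GCD graph with edge density δ > 0, and let t ≥ exp(exp(C₆)) and U ≥ 2C₆·log log t be real numbers. Assume that R♭(G) = ∅ and that E ⊆ {(v,w) ∈ V×W : ω_t(v,w) ≥ U}, where ω_t(v,w) = #{p prime : p | vw/gcd(v,w)², p ≤ t}. Then there exists a GCD subgraph G' = (μ,V,W,E',P,f,g) of G such that q(G') ≥ q(G)/2 > 0 and E' ⊆ {(v,w) ∈ V×W : #{p prime : p | vw/gcd(v,w)², C₆ < p ≤ t, p ∉ R(G)} ≥ U/2}. -/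

import Mathlib

open Finset

/-- A (bipartite) GCD graph: a measure `μ` on `ℕ`, finite vertex sets `V, W` of positive
integers, an edge set `E ⊆ V × W`, a (finite) set of primes `P`, and exponent functions
`f, g` such that for every `p ∈ P`: `p^{f(p)} ∣ v` for all `v ∈ V`, `p^{g(p)} ∣ w` for all
`w ∈ W`, and `p^{min(f(p),g(p))}` exactly divides `gcd(v, w)` for every edge `(v, w)`. -/
structure GCDGraph where
  mu : ℕ → ℝ
  mu_nonneg : ∀ n, 0 ≤ mu n
  V : Finset ℕ
  W : Finset ℕ
  V_pos : ∀ v ∈ V, 0 < v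
  W_pos : ∀ w ∈ W, 0 < w
  E : Finset (ℕ × ℕ)
  E_sub : E ⊆ V ×ˢ W
  P : Finset ℕ
  P_prime : ∀ p ∈ P, p.Prime
  f : ℕ → ℕ
  g : ℕ → ℕ
  f_dvd : ∀ p ∈ P, ∀ v ∈ V, p ^ f p ∣ v
  g_dvd : ∀ p ∈ P, ∀ w ∈ W, p ^ g p ∣ w
  gcd_exact : ∀ p ∈ P, ∀ e ∈ E,
    p ^ min (f p) (g p) ∣ Nat.gcd e.1 e.2 ∧ ¬ p ^ (min (f p) (g p) + 1) ∣ Nat.gcd e.1 e.2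

namespace GCDGraph

/-- The measure of a finite set of integers: `μ(S) = ∑_{n ∈ S} μ(n)`. -/
noncomputable def muSet (mu : ℕ → ℝ) (S : Finset ℕ) : ℝ := ∑ n ∈ S, mu n

/-- The measure of a finite set of pairs: `μ(E) = ∑_{(n₁,n₂) ∈ E} μ(n₁) μ(n₂)`. -/
noncomputable def muEdges (mu : ℕ → ℝ) (E : Finset (ℕ × ℕ)) : ℝ := ∑ e ∈ E, mu e.1 * mu e.2

/-- Edge density `δ = μ(E) / (μ(V) μ(W))` (equal to `0` when `μ(V) μ(W) = 0`,
by the Lean convention `x / 0 = 0`). -/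
noncomputable def densityRaw (mu : ℕ → ℝ) (V W : Finset ℕ) (E : Finset (ℕ × ℕ)) : ℝ :=
  muEdges mu E / (muSet mu V * muSet mu W)

/-- The quality
`q = δ^{2+τ} μ(V) μ(W) ∏_{p ∈ P} p^{|f(p)-g(p)|} (1 - 1_{f(p)=g(p)≥1}/p)^{-2} (1 - p^{-1-τ/4})^{-3}`. -/
noncomputable def qualityRaw (τ : ℝ) (mu : ℕ → ℝ) (V W : Finset ℕ) (E : Finset (ℕ × ℕ))
    (P : Finset ℕ) (f g : ℕ → ℕ) : ℝ :=
  densityRaw mu V W E ^ (2 + τ) * muSet mu V * muSet mu W *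
    ∏ p ∈ P, ((p : ℝ) ^ (((f p : ℤ) - (g p : ℤ)).natAbs) *
      ((1 - (if f p = g p ∧ 1 ≤ f p then ((p : ℝ))⁻¹ else 0))⁻¹) ^ 2 *
      ((1 - (p : ℝ) ^ (-1 - τ / 4))⁻¹) ^ 3)

/-- The edge density of a GCD graph. -/
noncomputable def density (G : GCDGraph) : ℝ := densityRaw G.mu G.V G.W G.E

/-- The quality of a GCD graph (with parameter `τ`). -/
noncomputable def quality (τ : ℝ) (G : GCDGraph) : ℝ :=
  qualityRaw τ G.mu G.V G.W G.E G.P G.f G.g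

/-- `G'` is a GCD subgraph of `G`. -/
def IsSubgraph (G' G : GCDGraph) : Prop :=
  G'.mu = G.mu ∧ G'.V ⊆ G.V ∧ G'.W ⊆ G.W ∧ G'.E ⊆ G.E ∧ G.P ⊆ G'.P ∧
    (∀ p ∈ G.P, G'.f p = G.f p) ∧ (∀ p ∈ G.P, G'.g p = G.g p)

/-- `G` is `(P,f,g)`-maximal: every GCD subgraph with the same multiplicative data has
quality at most `q(G)`. -/
def IsMaximal (τ : ℝ) (G : GCDGraph) : Prop :=
  ∀ G' : GCDGraph, IsSubgraph G' G → G'.P = G.P → quality τ G' ≤ quality τ G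

/-- `R(G)`: the set of primes `p ∉ P` dividing `gcd(v,w)` for some edge `(v,w)`. -/
def R (G : GCDGraph) : Set ℕ :=
  {p | p.Prime ∧ p ∉ G.P ∧ ∃ e ∈ G.E, p ∣ Nat.gcd e.1 e.2}

/-- `S_{p^k}`: the subset of elements of `S` exactly divisible by `p^k`. -/
def exactPart (S : Finset ℕ) (p k : ℕ) : Finset ℕ :=
  S.filter fun v => p ^ k ∣ v ∧ ¬ p ^ (k + 1) ∣ v

/-- `E_{p^k, p^ℓ} = E ∩ (V_{p^k} × W_{p^ℓ})`. -/
def edgesAt (G : GCDGraph) (p k l : ℕ) : Finset (ℕ × ℕ) :=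
  G.E.filter fun e => e.1 ∈ exactPart G.V p k ∧ e.2 ∈ exactPart G.W p l

/-- The quality of the GCD subgraph `G_{p^k, p^ℓ}`, with vertex sets `V_{p^k}`, `W_{p^ℓ}`,
edges `E_{p^k,p^ℓ}`, prime set `P ∪ {p}` and `f, g` extended by `f(p) = k`, `g(p) = ℓ`. -/
noncomputable def qualityAt (τ : ℝ) (G : GCDGraph) (p k l : ℕ) : ℝ :=
  qualityRaw τ G.mu (exactPart G.V p k) (exactPart G.W p l) (edgesAt G p k l)
    (insert p G.P) (Function.update G.f p k) (Function.update G.g p l)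

noncomputable def C1 (τ : ℝ) : ℝ := 10 ^ 4 / τ
noncomputable def C2 (τ M : ℝ) : ℝ := 10 * M * C1 τ ^ 3
noncomputable def C3 (τ : ℝ) : ℝ := 10 ^ 3 * C1 τ ^ 3
noncomputable def C4 (τ M : ℝ) : ℝ := 10 ^ 10 * M ^ 2 * C2 τ M ^ 2
noncomputable def C5 (τ M : ℝ) : ℝ := max (C3 τ) ((50 * Real.log (C4 τ M)) ^ 3)
noncomputable def C6 (τ M : ℝ) : ℝ :=
  max (C4 τ M) (max (10 ^ 4 * M * C2 τ M) (C2 τ M ^ (10 / τ)))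
noncomputable def C7 (τ M : ℝ) : ℝ := C5 τ M ^ C6 τ M

/-- `R♯(G)`: those `p ∈ R(G)` admitting `k ≥ 0` with `μ(V_{p^k})/μ(V) ≥ 1 − C₂/p` and
`μ(W_{p^k})/μ(W) ≥ 1 − C₂/p`, and such that `q(G_{p^a,p^b}) < M q(G)` for all `a ≠ b`. -/
def Rsharp (τ M : ℝ) (G : GCDGraph) : Set ℕ :=
  {p ∈ R G |
    (∃ k : ℕ, 1 - C2 τ M / (p : ℝ) ≤ muSet G.mu (exactPart G.V p k) / muSet G.mu G.V ∧
        1 - C2 τ M / (p : ℝ) ≤ muSet G.mu (exactPart G.W p k) / muSet G.mu G.W) ∧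
    ∀ a b : ℕ, a ≠ b → qualityAt τ G p a b < M * quality τ G}

/-- `R♭(G) = R(G) \ R♯(G)`. -/
def Rflat (τ M : ℝ) (G : GCDGraph) : Set ℕ := R G \ Rsharp τ M G

/-- The neighbourhood `Γ_G(v) = {w ∈ W : (v,w) ∈ E}` of a left vertex. -/
def nbhdOfV (G : GCDGraph) (v : ℕ) : Finset ℕ := G.W.filter fun w => (v, w) ∈ G.E

/-- The neighbourhood `Γ_G(w) = {v ∈ V : (v,w) ∈ E}` of a right vertex. -/
def nbhdOfW (G : GCDGraph) (w : ℕ) : Finset ℕ := G.V.filter fun v => (v, w) ∈ G.E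

end GCDGraph

open GCDGraph

/-- `ω_t(v,w) = #{p prime : p | vw/gcd(v,w)², p ≤ t}`. -/
noncomputable def omegaFun (t : ℝ) (q r : ℕ) : ℕ :=
  ((q * r / Nat.gcd q r ^ 2).primeFactors.filter (fun p : ℕ => (p : ℝ) ≤ t)).card

open scoped Classical in
/-- `#{p prime : p | vw/gcd(v,w)², c < p ≤ t, p ∉ S}`. -/
noncomputable def omegaFunRes (c t : ℝ) (S : Set ℕ) (q r : ℕ) : ℕ :=
  ((q * r / Nat.gcd q r ^ 2).primeFactors.filter
      (fun p : ℕ => c < (p : ℝ) ∧ (p : ℝ) ≤ t ∧ p ∉ S)).card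

/-!
Fix a prime `p > C₆` in `R(G)`; since `R♭(G) = ∅` it lies in `R♯(G)`. An edge `(v, w)` has
`p ∣ vw / gcd(v, w)²` exactly when `v_p(v) ≠ v_p(w)`, so these edges are covered by the graphs
`G_{p^a, p^b}` with `a ≠ b`. Writing `s = 2 + τ`, the bound `q(G_{p^a,p^b}) < M q(G)` solved for
the edge measure gives `μ(E_{p^a,p^b}) ≤ M μ(E) (x_a y_b)^{1 - 1/s} p^{-|a-b|/s}` with
`x_a = μ(V_{p^a})/μ(V)`, `y_b = μ(W_{p^b})/μ(W)`. As `V` and `W` are concentrated on one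
valuation `k` up to `C₂/p`, summing this geometric series gives measure `≪ M C₂² μ(E) / p`.
Summing over `p ≤ t` with the dyadic Chebyshev bound `∑_{p ≤ t} 1/p ≪ log log t`, and using
`U ≥ 2 C₆ log log t` with `C₆ ≥ 10⁴ M C₂²`, Markov's inequality shows that edges with more
than `U/4` prime factors of `vw / gcd(v, w)²` in `R(G) ∩ (C₆, t]` carry at most a tenth of `μ(E)`.
Deleting them lowers the quality by at most `(9/10)^{2+τ} ≥ 1/2`, and on the remaining edges
`ω_t ≤ (C₆ + 1) + U/4 + #{p ∣ vw/gcd², C₆ < p ≤ t, p ∉ R(G)}`.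
-/

section Inequalities

theorem sum_pow_le_div_one_sub {r : ℝ} (hr0 : 0 ≤ r) (hr1 : r < 1) {T : Finset ℕ}
    (hT : 0 ∉ T) : ∑ j ∈ T, r ^ j ≤ r / (1 - r) := by
  have h := (summable_geometric_of_lt_one hr0 hr1).sum_le_tsum (insert 0 T)
    fun j _ => pow_nonneg hr0 j
  rw [sum_insert hT, tsum_geometric_of_lt_one hr0 hr1, pow_zero] at h
  have : (1 - r)⁻¹ - 1 = r / (1 - r) := by
    field_simp [show 1 - r ≠ 0 by linarith]; ring
  linarith

theorem sum_erase_pow_natAbs_sub_le {r : ℝ} (hr0 : 0 ≤ r) (hr1 : r < 1) (I : Finset ℕ)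
    (a : ℕ) : ∑ b ∈ I.erase a, r ^ ((a : ℤ) - b).natAbs ≤ 2 * r / (1 - r) := by
  have half : ∀ J ⊆ I.erase a, Set.InjOn (fun b : ℕ => ((a : ℤ) - b).natAbs) J →
      ∑ b ∈ J, r ^ ((a : ℤ) - b).natAbs ≤ r / (1 - r) := by
    intro J hJ hinj
    rw [← sum_image (f := (r ^ ·)) hinj]
    refine sum_pow_le_div_one_sub hr0 hr1 fun h0 => ?_
    obtain ⟨b, hb, hb0⟩ := mem_image.mp h0
    have := (mem_erase.mp (hJ hb)).1
    omega
  rw [← sum_filter_add_sum_filter_not _ (· < a)]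
  have below := half ((I.erase a).filter (· < a)) (filter_subset _ _) fun b hb c hc h => by
    simp only [mem_coe, mem_filter, mem_erase] at hb hc; simp only at h; omega
  have above := half ((I.erase a).filter (¬ · < a)) (filter_subset _ _) fun b hb c hc h => by
    simp only [mem_coe, mem_filter, mem_erase] at hb hc; simp only at h; omega
  linarith [show 2 * r / (1 - r) = r / (1 - r) + r / (1 - r) by ring]

theorem sum_offDiag_mul_pow_natAbs_le {r : ℝ} (hr0 : 0 ≤ r) (hr : r ≤ 1 / 2) (I : Finset ℕ)
    {F : ℕ × ℕ → ℝ} {u v : ℕ → ℝ} (hu : ∀ a, 0 ≤ u a) (hv : ∀ b, 0 ≤ v b)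
    (hF : ∀ ab ∈ I.offDiag, F ab ≤ u ab.1 + v ab.2) :
    ∑ ab ∈ I.offDiag, F ab * r ^ ((ab.1 : ℤ) - ab.2).natAbs
      ≤ 4 * r * (∑ a ∈ I, u a + ∑ b ∈ I, v b) := by
  have geom : ∀ a, ∑ b ∈ I.erase a, r ^ ((a : ℤ) - b).natAbs ≤ 4 * r := fun a =>
    (sum_erase_pow_natAbs_sub_le hr0 (by linarith) I a).trans <| by
      rw [div_le_iff₀ (by linarith)]; nlinarith
  have iter : ∀ φ : ℕ × ℕ → ℝ,
      ∑ ab ∈ I.offDiag, φ ab = ∑ a ∈ I, ∑ b ∈ I.erase a, φ (a, b) :=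
    fun φ => sum_finset_product _ _ _ fun ab => by
      simp only [mem_offDiag, mem_erase]; tauto
  have iter' : ∀ φ : ℕ × ℕ → ℝ,
      ∑ ab ∈ I.offDiag, φ ab = ∑ b ∈ I, ∑ a ∈ I.erase b, φ (a, b) :=
    fun φ => sum_finset_product_right _ _ _ fun ab => by
      simp only [mem_offDiag, mem_erase]; tauto
  calc ∑ ab ∈ I.offDiag, F ab * r ^ ((ab.1 : ℤ) - ab.2).natAbs
      ≤ ∑ ab ∈ I.offDiag, (u ab.1 * r ^ ((ab.1 : ℤ) - ab.2).natAbs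
          + v ab.2 * r ^ ((ab.2 : ℤ) - ab.1).natAbs) := by
        refine sum_le_sum fun ab hab => ?_
        rw [← Int.natAbs_neg, neg_sub, ← add_mul]
        exact mul_le_mul_of_nonneg_right (hF ab hab) (pow_nonneg hr0 _)
    _ = ∑ a ∈ I, u a * ∑ b ∈ I.erase a, r ^ ((a : ℤ) - b).natAbs
          + ∑ b ∈ I, v b * ∑ a ∈ I.erase b, r ^ ((b : ℤ) - a).natAbs := by
        rw [sum_add_distrib, iter, iter']; simp only [mul_sum]
    _ ≤ ∑ a ∈ I, u a * (4 * r) + ∑ b ∈ I, v b * (4 * r) := by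
        gcongr with a _ b _
        · exact hu a
        · exact geom a
        · exact hv b
        · exact geom b
    _ = 4 * r * (∑ a ∈ I, u a + ∑ b ∈ I, v b) := by rw [← sum_mul, ← sum_mul]; ring

theorem sum_rpow_le_rpow_of_sum_le {ι : Type*} {s : Finset ι} {x : ι → ℝ} {c q : ℝ}
    (hx : ∀ i ∈ s, 0 ≤ x i) (hxc : ∑ i ∈ s, x i ≤ c) (hq : 1 ≤ q) :
    ∑ i ∈ s, x i ^ q ≤ c ^ q := by
  have hc : 0 ≤ c := (sum_nonneg hx).trans hxc
  calc ∑ i ∈ s, x i ^ q ≤ ∑ i ∈ s, x i * c ^ (q - 1) := by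
        refine sum_le_sum fun i hi => ?_
        have hxi : x i ≤ c := (single_le_sum hx hi).trans hxc
        calc x i ^ q = x i * x i ^ (q - 1) := by
              rw [← Real.rpow_one_add' (hx i hi) (by linarith)]; norm_num
          _ ≤ x i * c ^ (q - 1) :=
            mul_le_mul_of_nonneg_left (Real.rpow_le_rpow (hx i hi) hxi (by linarith)) (hx i hi)
    _ ≤ c * c ^ (q - 1) := by rw [← sum_mul]; gcongr
    _ = c ^ q := by rw [← Real.rpow_one_add' hc (by linarith)]; norm_num

theorem sum_ite_eq_rpow_le {I : Finset ℕ} {z : ℕ → ℝ} {c θ : ℝ} (k : ℕ)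
    (hz : ∀ a, 0 ≤ z a) (hzc : ∑ a ∈ I.erase k, z a ≤ c) (hθ : 1 / 2 ≤ θ) :
    ∑ a ∈ I, (if a = k then c ^ θ else z a ^ (2 * θ) / 2) ≤ c ^ θ + c ^ (2 * θ) / 2 := by
  have hc : 0 ≤ c := (sum_nonneg fun a _ => hz a).trans hzc
  calc ∑ a ∈ I, (if a = k then c ^ θ else z a ^ (2 * θ) / 2)
      ≤ ∑ a ∈ insert k (I.erase k), (if a = k then c ^ θ else z a ^ (2 * θ) / 2) := by
        refine sum_le_sum_of_subset_of_nonneg (insert_erase_subset k I) fun a _ _ => ?_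
        split_ifs
        · exact Real.rpow_nonneg hc θ
        · exact div_nonneg (Real.rpow_nonneg (hz a) _) zero_le_two
    _ = c ^ θ + (∑ a ∈ I.erase k, z a ^ (2 * θ)) / 2 := by
        rw [sum_insert (notMem_erase k I), sum_div, if_pos rfl]
        congr 1
        exact sum_congr rfl fun a ha => if_neg (ne_of_mem_erase ha)
    _ ≤ c ^ θ + c ^ (2 * θ) / 2 := by
        gcongr
        exact sum_rpow_le_rpow_of_sum_le (fun a _ => hz a) hzc (by linarith)

theorem rpow_mul_le_add_rpow_two_mul {x y θ : ℝ} (hx : 0 ≤ x) (hy : 0 ≤ y) :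
    (x * y) ^ θ ≤ (x ^ (2 * θ) + y ^ (2 * θ)) / 2 := by
  rw [Real.mul_rpow hx hy, mul_comm 2 θ, Real.rpow_mul hx, Real.rpow_mul hy, Real.rpow_two,
    Real.rpow_two]
  nlinarith [two_mul_le_add_sq (x ^ θ) (y ^ θ)]

theorem rpow_mul_le_ite_add_ite {x y : ℕ → ℝ} {c θ : ℝ} {k a b : ℕ} (hx : 0 ≤ x a)
    (hy : 0 ≤ y b) (hxk : x k ≤ 1) (hyk : y k ≤ 1) (hxc : a ≠ k → x a ≤ c)
    (hyc : b ≠ k → y b ≤ c) (hθ : 0 ≤ θ) (hab : a ≠ b) :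
    (x a * y b) ^ θ ≤ (if a = k then c ^ θ else x a ^ (2 * θ) / 2) +
      (if b = k then c ^ θ else y b ^ (2 * θ) / 2) := by
  by_cases hak : a = k
  · subst hak
    have : (x a * y b) ^ θ ≤ c ^ θ := Real.rpow_le_rpow (mul_nonneg hx hy)
      ((mul_le_of_le_one_left hy hxk).trans (hyc hab.symm)) hθ
    rw [if_pos rfl, if_neg hab.symm]
    linarith [Real.rpow_nonneg hy (2 * θ)]
  by_cases hbk : b = k
  · subst hbk
    have : (x a * y b) ^ θ ≤ c ^ θ := Real.rpow_le_rpow (mul_nonneg hx hy)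
      ((mul_le_of_le_one_right hx hyk).trans (hxc hak)) hθ
    rw [if_pos rfl, if_neg hak]
    linarith [Real.rpow_nonneg hx (2 * θ)]
  rw [if_neg hak, if_neg hbk, ← add_div]
  exact rpow_mul_le_add_rpow_two_mul hx hy

theorem sum_offDiag_rpow_mul_pow_natAbs_le {I : Finset ℕ} {x y : ℕ → ℝ} {c θ r : ℝ}
    (k : ℕ) (hx : ∀ a, 0 ≤ x a) (hy : ∀ b, 0 ≤ y b) (hxk : x k ≤ 1) (hyk : y k ≤ 1)
    (hxc : ∑ a ∈ I.erase k, x a ≤ c) (hyc : ∑ b ∈ I.erase k, y b ≤ c) (hθ : 1 / 2 ≤ θ)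
    (hr0 : 0 ≤ r) (hr : r ≤ 1 / 2) :
    ∑ ab ∈ I.offDiag, (x ab.1 * y ab.2) ^ θ * r ^ ((ab.1 : ℤ) - ab.2).natAbs
      ≤ 4 * r * (2 * c ^ θ + c ^ (2 * θ)) := by
  have hc : 0 ≤ c := (sum_nonneg fun a _ => hx a).trans hxc
  -- the large mass `x k` (resp. `y k`) only ever meets a small one `y b ≤ c` (resp. `x a ≤ c`)
  set w : (ℕ → ℝ) → ℕ → ℝ := fun z a => if a = k then c ^ θ else z a ^ (2 * θ) / 2
  have hw : ∀ z : ℕ → ℝ, (∀ a, 0 ≤ z a) → ∀ a, 0 ≤ w z a := fun z hz a => by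
    simp only [w]
    split_ifs
    · exact Real.rpow_nonneg hc θ
    · exact div_nonneg (Real.rpow_nonneg (hz a) _) zero_le_two
  have small : ∀ z : ℕ → ℝ, (∀ a, 0 ≤ z a) → ∑ a ∈ I.erase k, z a ≤ c →
      ∀ b ∈ I, b ≠ k → z b ≤ c := fun z hz hzc b hb hbk =>
    (single_le_sum (fun a _ => hz a) (mem_erase.mpr ⟨hbk, hb⟩)).trans hzc
  have pointwise : ∀ ab ∈ I.offDiag, (x ab.1 * y ab.2) ^ θ ≤ w x ab.1 + w y ab.2 := by
    intro ab hab
    obtain ⟨ha, hb, hne⟩ := mem_offDiag.mp hab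
    exact rpow_mul_le_ite_add_ite (hx _) (hy _) hxk hyk (small x hx hxc _ ha)
      (small y hy hyc _ hb) (by linarith) hne
  calc ∑ ab ∈ I.offDiag, (x ab.1 * y ab.2) ^ θ * r ^ ((ab.1 : ℤ) - ab.2).natAbs
      ≤ 4 * r * (∑ a ∈ I, w x a + ∑ b ∈ I, w y b) :=
        sum_offDiag_mul_pow_natAbs_le hr0 hr I (hw x hx) (hw y hy) pointwise
    _ ≤ 4 * r * (2 * c ^ θ + c ^ (2 * θ)) := by
        have := sum_ite_eq_rpow_le k hx hxc hθ
        have := sum_ite_eq_rpow_le k hy hyc hθ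
        exact mul_le_mul_of_nonneg_left (by linarith) (by positivity)

/-- With `e'/z'` and `e/z` the edge densities of a subgraph and of the whole graph, this is the
comparison of qualities solved for the edge measure `e'` of the subgraph. -/
theorem le_mul_rpow_of_div_rpow_mul_le {s m e e' z z' P : ℝ} (hs : 1 ≤ s) (hm : 1 ≤ m)
    (he : 0 ≤ e) (hz : 0 < z) (he' : 0 ≤ e') (he'z' : e' ≤ z') (hP : 0 < P)
    (h : (e' / z') ^ s * z' * P ≤ m * ((e / z) ^ s * z)) :
    e' ≤ m * e * (z' / z) ^ (1 - s⁻¹) * P ^ (-s⁻¹) := by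
  rcases he'.eq_or_lt with rfl | he'0
  · positivity
  have hz' : 0 < z' := he'0.trans_le he'z'
  have hs0 : 0 < s := by linarith
  rw [← Real.rpow_le_rpow_iff he' (by positivity) hs0]
  have hpow : (m * e * (z' / z) ^ (1 - s⁻¹) * P ^ (-s⁻¹)) ^ s
      = m ^ s * e ^ s * (z' / z) ^ (s - 1) * P⁻¹ := by
    rw [Real.mul_rpow (by positivity) (by positivity),
      Real.mul_rpow (by positivity) (by positivity), Real.mul_rpow (by positivity) he,
      ← Real.rpow_mul (by positivity), ← Real.rpow_mul hP.le,
      show (1 - s⁻¹) * s = s - 1 by field_simp, show -s⁻¹ * s = -1 by field_simp,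
      Real.rpow_neg_one]
  have hz'z : (z' / z) ^ (s - 1) = z' ^ s / z ^ s * (z / z') := by
    rw [Real.rpow_sub_one (by positivity), Real.div_rpow hz'.le hz.le]
    field_simp
  calc e' ^ s = (e' / z') ^ s * z' * P * (z' ^ s / z' / P) := by
        rw [Real.div_rpow he' hz'.le]
        field_simp
    _ ≤ m * ((e / z) ^ s * z) * (z' ^ s / z' / P) := by gcongr
    _ = m * e ^ s * (z' / z) ^ (s - 1) * P⁻¹ := by
        rw [hz'z, Real.div_rpow he hz.le]
        field_simp
    _ ≤ m ^ s * e ^ s * (z' / z) ^ (s - 1) * P⁻¹ := by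
        gcongr
        simpa using Real.rpow_le_rpow_of_exponent_le hm hs
    _ = _ := hpow.symm

theorem div_rpow_mul_rpow_neg_le {C p q Q e : ℝ} (hC : 1 ≤ C) (hp : 1 ≤ p)
    (hqQ : q ≤ Q) (he : 1 ≤ q + e) : (C / p) ^ q * p ^ (-e) ≤ C ^ Q / p := by
  have hp0 : 0 < p := by linarith
  calc (C / p) ^ q * p ^ (-e) = C ^ q * p ^ (-(q + e)) := by
        rw [Real.div_rpow (by linarith) hp0.le, neg_add, Real.rpow_add hp0]
        simp only [Real.rpow_neg hp0.le]
        ring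
    _ ≤ C ^ Q * p ^ (-1 : ℝ) :=
        mul_le_mul (Real.rpow_le_rpow_of_exponent_le hC hqQ)
          (Real.rpow_le_rpow_of_exponent_le hp (by linarith)) (by positivity) (by positivity)
    _ = C ^ Q / p := by rw [Real.rpow_neg_one, div_eq_mul_inv]

theorem four_mul_rpow_neg_inv_mul_add_le {C p s : ℝ} (hC : 1 ≤ C) (hp : 1 ≤ p)
    (hs : 2 ≤ s) :
    4 * p ^ (-s⁻¹) * (2 * (C / p) ^ (1 - s⁻¹) + (C / p) ^ (2 * (1 - s⁻¹))) ≤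
      12 * C ^ 2 / p := by
  have hs' : s⁻¹ ≤ 1 / 2 := by rw [one_div]; exact inv_anti₀ two_pos hs
  have hs0 : 0 < s⁻¹ := by positivity
  have h1 : (C / p) ^ (1 - s⁻¹) * p ^ (-s⁻¹) ≤ C ^ (1 : ℝ) / p :=
    div_rpow_mul_rpow_neg_le hC hp (by linarith) (by linarith)
  have h2 : (C / p) ^ (2 * (1 - s⁻¹)) * p ^ (-s⁻¹) ≤ C ^ (2 : ℝ) / p :=
    div_rpow_mul_rpow_neg_le hC hp (by linarith) (by linarith)
  rw [Real.rpow_one] at h1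
  rw [Real.rpow_two] at h2
  have h3 : C / p ≤ C ^ 2 / p := by gcongr; nlinarith
  calc 4 * p ^ (-s⁻¹) * (2 * (C / p) ^ (1 - s⁻¹) + (C / p) ^ (2 * (1 - s⁻¹)))
      = 8 * ((C / p) ^ (1 - s⁻¹) * p ^ (-s⁻¹)) +
          4 * ((C / p) ^ (2 * (1 - s⁻¹)) * p ^ (-s⁻¹)) := by
        ring
    _ ≤ 12 * (C ^ 2 / p) := by linarith
    _ = 12 * C ^ 2 / p := by ring

theorem rpow_neg_inv_le_half {x s : ℝ} (hs : 0 < s) (hx : 2 ^ s ≤ x) :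
    x ^ (-s⁻¹) ≤ 1 / 2 := by
  have hx0 : 0 ≤ x := (Real.rpow_nonneg zero_le_two s).trans hx
  have h2 : 2 ≤ x ^ s⁻¹ := (Real.le_rpow_inv_iff_of_pos zero_le_two hx0 hs).mpr hx
  rw [Real.rpow_neg hx0, one_div]
  exact inv_anti₀ two_pos h2

end Inequalities

section PrimeReciprocals

theorem card_mul_le_of_forall_mem_Ico_two_pow (j : ℕ) {S : Finset ℕ}
    (hS : ∀ p ∈ S, p.Prime ∧ 2 ^ j ≤ p ∧ p < 2 ^ (j + 1)) : #S * j ≤ 2 ^ (j + 2) := by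
  -- compare `∏_{p ∈ S} p` with Chebyshev's bound on the primorial
  have hprod : 2 ^ (j * #S) ≤ 2 ^ 2 ^ (j + 2) :=
    calc 2 ^ (j * #S) = ∏ _p ∈ S, 2 ^ j := by rw [prod_const, pow_mul]
      _ ≤ ∏ p ∈ S, p := prod_le_prod' fun p hp => (hS p hp).2.1
      _ ≤ primorial (2 ^ (j + 1)) := by
          refine prod_le_prod_of_subset_of_one_le' (fun p hp => ?_) fun p hp _ =>
            (mem_filter.mp hp).2.one_lt.le
          have := hS p hp
          exact mem_filter.mpr ⟨mem_range.mpr (by omega), this.1⟩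
      _ ≤ 4 ^ 2 ^ (j + 1) := primorial_le_four_pow _
      _ = 2 ^ 2 ^ (j + 2) := by
          rw [show (4 : ℕ) = 2 ^ 2 by rfl, ← pow_mul, pow_succ 2 (j + 1)]; ring
  rw [mul_comm]
  exact (Nat.pow_le_pow_iff_right (by norm_num)).mp hprod

theorem sum_inv_primesLE_le (n : ℕ) :
    ∑ p ∈ Nat.primesLE n, (p : ℝ)⁻¹ ≤ 4 * (1 + Real.log (Nat.log 2 n)) := by
  have hmaps : ∀ p ∈ Nat.primesLE n, Nat.log 2 p ∈ Icc 1 (Nat.log 2 n) := fun p hp => by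
    obtain ⟨hpn, hp⟩ := Nat.mem_primesLE.mp hp
    exact mem_Icc.mpr ⟨Nat.log_pos one_lt_two hp.two_le, Nat.log_mono_right hpn⟩
  rw [← sum_fiberwise_of_maps_to hmaps]
  calc ∑ j ∈ Icc 1 (Nat.log 2 n), ∑ p ∈ Nat.primesLE n with Nat.log 2 p = j, (p : ℝ)⁻¹
      ≤ ∑ j ∈ Icc 1 (Nat.log 2 n), 4 * (j : ℝ)⁻¹ := by
        refine sum_le_sum fun j hj => ?_
        set S := {p ∈ Nat.primesLE n | Nat.log 2 p = j}
        have hj : (0 : ℝ) < j := by exact_mod_cast (mem_Icc.mp hj).1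
        have hS : ∀ p ∈ S, p.Prime ∧ 2 ^ j ≤ p ∧ p < 2 ^ (j + 1) := fun p hp => by
          obtain ⟨hpn, hlog⟩ := mem_filter.mp hp
          have hp := (Nat.mem_primesLE.mp hpn).2
          exact ⟨hp, hlog ▸ Nat.pow_log_le_self 2 hp.ne_zero,
            hlog ▸ Nat.lt_pow_succ_log_self one_lt_two p⟩
        have hcard : (#S : ℝ) * j ≤ 2 ^ (j + 2) := by
          exact_mod_cast card_mul_le_of_forall_mem_Ico_two_pow j hS
        calc ∑ p ∈ S, (p : ℝ)⁻¹ ≤ #S * ((2 : ℝ) ^ j)⁻¹ := by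
              rw [← nsmul_eq_mul]
              refine sum_le_card_nsmul _ _ _ fun p hp => inv_anti₀ (by positivity) ?_
              exact_mod_cast (hS p hp).2.1
          _ = #S * j / (j * 2 ^ j) := by field_simp
          _ ≤ 2 ^ (j + 2) / (j * 2 ^ j) := by gcongr
          _ = 4 * (j : ℝ)⁻¹ := by rw [pow_add]; field_simp; norm_num
    _ = 4 * harmonic (Nat.log 2 n) := by
        rw [← mul_sum, harmonic_eq_sum_Icc]; push_cast; rfl
    _ ≤ 4 * (1 + Real.log (Nat.log 2 n)) := by
        gcongr; exact harmonic_le_one_add_log _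

theorem sum_inv_le_of_prime_le {x : ℝ} (hx : 1 ≤ Real.log x) {T : Finset ℕ}
    (hT : ∀ p ∈ T, p.Prime ∧ (p : ℝ) ≤ x) :
    ∑ p ∈ T, (p : ℝ)⁻¹ ≤ 4 * (2 + Real.log (Real.log x)) := by
  have hsub : T ⊆ Nat.primesLE ⌊x⌋₊ := fun p hp =>
    Nat.mem_primesLE.mpr ⟨Nat.le_floor (hT p hp).2, (hT p hp).1⟩
  have hloglog : 0 ≤ Real.log (Real.log x) := Real.log_nonneg hx
  set J := Nat.log 2 ⌊x⌋₊
  have hJ : Real.log J ≤ 1 + Real.log (Real.log x) := by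
    rcases Nat.eq_zero_or_pos J with hJ0 | hJ0
    · rw [hJ0, Nat.cast_zero, Real.log_zero]; linarith
    have hfloor : ⌊x⌋₊ ≠ 0 := fun h => by simp [J, h] at hJ0
    have h2J : (2 : ℝ) ^ J ≤ x := calc
      (2 : ℝ) ^ J ≤ ⌊x⌋₊ := by exact_mod_cast Nat.pow_log_le_self 2 hfloor
      _ ≤ x := Nat.floor_le (Nat.pos_of_floor_pos (Nat.pos_of_ne_zero hfloor)).le
    have hJx : (J : ℝ) ≤ 2 * Real.log x := by
      have := Real.log_le_log (by positivity) h2J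
      rw [Real.log_pow] at this
      nlinarith [Real.log_two_gt_d9]
    calc Real.log J ≤ Real.log (2 * Real.log x) := Real.log_le_log (by exact_mod_cast hJ0) hJx
      _ = Real.log 2 + Real.log (Real.log x) := Real.log_mul two_ne_zero (by linarith)
      _ ≤ 1 + Real.log (Real.log x) := by linarith [Real.log_two_lt_d9]
  calc ∑ p ∈ T, (p : ℝ)⁻¹ ≤ ∑ p ∈ Nat.primesLE ⌊x⌋₊, (p : ℝ)⁻¹ :=
        sum_le_sum_of_subset_of_nonneg hsub fun _ _ _ => by positivity
    _ ≤ 4 * (1 + Real.log J) := sum_inv_primesLE_le _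
    _ ≤ 4 * (2 + Real.log (Real.log x)) := by linarith

end PrimeReciprocals

section Counting

theorem card_filter_le_add_one (s : Finset ℕ) {c : ℝ} (hc : 0 ≤ c) :
    (#(s.filter fun n : ℕ => (n : ℝ) ≤ c) : ℝ) ≤ c + 1 := by
  have hsub : s.filter (fun n : ℕ => (n : ℝ) ≤ c) ⊆ range (⌊c⌋₊ + 1) := fun n hn =>
    mem_range.mpr (Nat.lt_succ_of_le (Nat.le_floor (mem_filter.mp hn).2))
  calc (#(s.filter fun n : ℕ => (n : ℝ) ≤ c) : ℝ) ≤ (⌊c⌋₊ + 1 : ℕ) := by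
        exact_mod_cast (card_le_card hsub).trans (card_range _).le
    _ ≤ c + 1 := by push_cast; linarith [Nat.floor_le hc]

theorem omegaFun_le_add_omegaFunRes {c : ℝ} (hc : 0 ≤ c) (t : ℝ) (S : Set ℕ) (v w : ℕ) :
    (omegaFun t v w : ℝ) ≤ c + 1 + omegaFunRes c t S v w + omegaFunRes c t Sᶜ v w := by
  classical
  unfold omegaFun omegaFunRes
  set n := v * w / Nat.gcd v w ^ 2
  have hsub : n.primeFactors.filter (fun q : ℕ => (q : ℝ) ≤ t) ⊆
      n.primeFactors.filter (fun q : ℕ => (q : ℝ) ≤ c) ∪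
        (n.primeFactors.filter (fun q : ℕ => c < (q : ℝ) ∧ (q : ℝ) ≤ t ∧ q ∉ S) ∪
          n.primeFactors.filter (fun q : ℕ => c < (q : ℝ) ∧ (q : ℝ) ≤ t ∧ q ∉ Sᶜ)) := by
    intro q hq
    obtain ⟨hqn, hqt⟩ := mem_filter.mp hq
    simp only [mem_union, mem_filter, Set.mem_compl_iff, not_not, hqn, hqt, true_and]
    by_cases hqc : (q : ℝ) ≤ c
    · exact Or.inl hqc
    · have hcq : c < q := lt_of_not_ge hqc
      by_cases hqS : q ∈ S
      · exact Or.inr (Or.inr ⟨hcq, hqS⟩)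
      · exact Or.inr (Or.inl ⟨hcq, hqS⟩)
  have hcard := (card_le_card hsub).trans <|
    (card_union_le _ _).trans (Nat.add_le_add_left (card_union_le _ _) _)
  have hsmall := card_filter_le_add_one n.primeFactors hc
  have key : (#(n.primeFactors.filter fun q : ℕ => (q : ℝ) ≤ t) : ℝ) ≤ c + 1 +
      #(n.primeFactors.filter fun q : ℕ => c < (q : ℝ) ∧ (q : ℝ) ≤ t ∧ q ∉ S) +
      #(n.primeFactors.filter fun q : ℕ => c < (q : ℝ) ∧ (q : ℝ) ≤ t ∧ q ∉ Sᶜ) := by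
    have : (#(n.primeFactors.filter fun q : ℕ => (q : ℝ) ≤ t) : ℝ) ≤
        #(n.primeFactors.filter fun q : ℕ => (q : ℝ) ≤ c) +
          (#(n.primeFactors.filter fun q : ℕ => c < (q : ℝ) ∧ (q : ℝ) ≤ t ∧ q ∉ S) +
            #(n.primeFactors.filter fun q : ℕ => c < (q : ℝ) ∧ (q : ℝ) ≤ t ∧ q ∉ Sᶜ)) := by
      exact_mod_cast hcard
    linarith
  -- `omegaFunRes` decides `q ∉ Sᶜ` classically, not through `Set.decidableCompl`
  convert key using 5

theorem mul_sum_filter_lt_le_sum_mul {ι : Type*} (s : Finset ι) {w h : ι → ℝ}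
    (hw : ∀ i ∈ s, 0 ≤ w i) (hh : ∀ i ∈ s, 0 ≤ h i) (a : ℝ) :
    a * ∑ i ∈ s with a < h i, w i ≤ ∑ i ∈ s, w i * h i := by
  rw [mul_sum]
  calc ∑ i ∈ s with a < h i, a * w i ≤ ∑ i ∈ s with a < h i, w i * h i := by
        refine sum_le_sum fun i hi => ?_
        obtain ⟨hi, hai⟩ := mem_filter.mp hi
        nlinarith [hw i hi]
    _ ≤ ∑ i ∈ s, w i * h i :=
        sum_le_sum_of_subset_of_nonneg (filter_subset _ _) fun i hi _ =>
          mul_nonneg (hw i hi) (hh i hi)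

theorem sum_mul_card_eq_sum_sum_filter {ι κ : Type*} [DecidableEq κ] (s : Finset ι)
    (K : Finset κ) (w : ι → ℝ) (S : ι → Finset κ) (hS : ∀ i ∈ s, S i ⊆ K) :
    ∑ i ∈ s, w i * #(S i) = ∑ q ∈ K, ∑ i ∈ s with q ∈ S i, w i := by
  calc ∑ i ∈ s, w i * #(S i) = ∑ i ∈ s, ∑ q ∈ K, if q ∈ S i then w i else 0 := by
        refine sum_congr rfl fun i hi => ?_
        rw [sum_ite_mem, inter_eq_right.mpr (hS i hi), sum_const, nsmul_eq_mul, mul_comm]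
    _ = ∑ q ∈ K, ∑ i ∈ s with q ∈ S i, w i := by rw [sum_comm]; simp only [sum_filter]

end Counting

section Constants

theorem one_le_C2 {τ M : ℝ} (hτ0 : 0 < τ) (hτ1 : τ ≤ 1) (hM : 1 ≤ M) :
    1 ≤ C2 τ M := by
  have hC1 : 1 ≤ C1 τ := by rw [C1, le_div_iff₀ hτ0]; linarith
  have := one_le_pow₀ (n := 3) hC1
  rw [C2]; nlinarith

theorem mul_C2_sq_le_C6 {τ M : ℝ} (hM : 1 ≤ M) : 10 ^ 4 * M * C2 τ M ^ 2 ≤ C6 τ M := by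
  refine le_trans ?_ (le_max_left _ _)
  rw [C4]
  have hM2 : 10 ^ 4 * M ≤ 10 ^ 10 * M ^ 2 := by nlinarith
  exact mul_le_mul_of_nonneg_right hM2 (sq_nonneg _)

theorem eight_le_C6 {τ M : ℝ} (hτ0 : 0 < τ) (hτ1 : τ ≤ 1) (hM : 1 ≤ M) :
    8 ≤ C6 τ M := by
  have := one_le_C2 hτ0 hτ1 hM
  nlinarith [mul_C2_sq_le_C6 (τ := τ) hM]

end Constants

theorem le_log_log_of_exp_exp_le {c t : ℝ} (h : Real.exp (Real.exp c) ≤ t) :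
    c ≤ Real.log (Real.log t) := by
  have h1 := Real.log_le_log (Real.exp_pos _) h
  rw [Real.log_exp] at h1
  have h2 := Real.log_le_log (Real.exp_pos _) h1
  rwa [Real.log_exp] at h2

namespace GCDGraph

section Measure

variable {mu : ℕ → ℝ}

theorem muSet_nonneg (hmu : ∀ n, 0 ≤ mu n) (S : Finset ℕ) : 0 ≤ muSet mu S :=
  sum_nonneg fun n _ => hmu n

theorem muSet_mono (hmu : ∀ n, 0 ≤ mu n) {S T : Finset ℕ} (h : S ⊆ T) :
    muSet mu S ≤ muSet mu T :=
  sum_le_sum_of_subset_of_nonneg h fun n _ _ => hmu n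

theorem muEdges_nonneg (hmu : ∀ n, 0 ≤ mu n) (E : Finset (ℕ × ℕ)) : 0 ≤ muEdges mu E :=
  sum_nonneg fun e _ => mul_nonneg (hmu e.1) (hmu e.2)

theorem muEdges_mono (hmu : ∀ n, 0 ≤ mu n) {E F : Finset (ℕ × ℕ)} (h : E ⊆ F) :
    muEdges mu E ≤ muEdges mu F :=
  sum_le_sum_of_subset_of_nonneg h fun e _ _ => mul_nonneg (hmu e.1) (hmu e.2)

theorem muEdges_le_muSet_mul_muSet (hmu : ∀ n, 0 ≤ mu n) {V W : Finset ℕ}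
    {E : Finset (ℕ × ℕ)} (h : E ⊆ V ×ˢ W) : muEdges mu E ≤ muSet mu V * muSet mu W := by
  refine (muEdges_mono hmu h).trans_eq ?_
  rw [muEdges, sum_product, muSet, muSet, sum_mul]
  simp only [mul_sum]

end Measure

section ExactPart

theorem disjoint_exactPart {S : Finset ℕ} {p a b : ℕ} (hab : a ≠ b) :
    Disjoint (exactPart S p a) (exactPart S p b) := by
  rw [disjoint_left]
  intro v hva hvb
  simp only [exactPart, mem_filter] at hva hvb
  rcases hab.lt_or_gt with h | h
  · exact hva.2.2 ((pow_dvd_pow p h).trans hvb.2.1)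
  · exact hvb.2.2 ((pow_dvd_pow p h).trans hva.2.1)

theorem sum_muSet_exactPart_erase_le {mu : ℕ → ℝ} (hmu : ∀ n, 0 ≤ mu n) (S : Finset ℕ)
    (p k : ℕ) (I : Finset ℕ) :
    ∑ a ∈ I.erase k, muSet mu (exactPart S p a) ≤
      muSet mu S - muSet mu (exactPart S p k) := by
  have hdisj : (I.erase k : Set ℕ).PairwiseDisjoint (exactPart S p) :=
    fun a _ b _ hab => disjoint_exactPart hab
  have hsub : (I.erase k).biUnion (exactPart S p) ⊆ S \ exactPart S p k := by
    intro v hv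
    obtain ⟨a, ha, hva⟩ := mem_biUnion.mp hv
    exact mem_sdiff.mpr ⟨(mem_filter.mp hva).1,
      disjoint_left.mp (disjoint_exactPart (ne_of_mem_erase ha)) hva⟩
  calc ∑ a ∈ I.erase k, muSet mu (exactPart S p a)
      = muSet mu ((I.erase k).biUnion (exactPart S p)) := (sum_biUnion hdisj).symm
    _ ≤ muSet mu (S \ exactPart S p k) := muSet_mono hmu hsub
    _ = muSet mu S - muSet mu (exactPart S p k) :=
        sum_sdiff_eq_sub (filter_subset _ _)

theorem sum_erase_muSet_exactPart_div_le {mu : ℕ → ℝ} (hmu : ∀ n, 0 ≤ mu n)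
    {S : Finset ℕ} (hS : 0 < muSet mu S) {p k : ℕ} {c : ℝ}
    (hk : 1 - c ≤ muSet mu (exactPart S p k) / muSet mu S) (I : Finset ℕ) :
    ∑ a ∈ I.erase k, muSet mu (exactPart S p a) / muSet mu S ≤ c := by
  rw [← sum_div, div_le_iff₀ hS]
  rw [le_div_iff₀ hS] at hk
  linarith [sum_muSet_exactPart_erase_le hmu S p k I]

theorem mem_exactPart_factorization {S : Finset ℕ} {p v : ℕ} (hp : p.Prime) (hv : v ∈ S)
    (hv0 : v ≠ 0) : v ∈ exactPart S p (v.factorization p) := by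
  simp only [exactPart, mem_filter, hp.pow_dvd_iff_le_factorization hv0]
  exact ⟨hv, le_rfl, by omega⟩

theorem factorization_ne_of_mem_primeFactors_div_gcd_sq {p v w : ℕ} (hv : v ≠ 0)
    (hw : w ≠ 0) (h : p ∈ (v * w / Nat.gcd v w ^ 2).primeFactors) :
    v.factorization p ≠ w.factorization p := by
  intro heq
  obtain ⟨hp, hdvd, hne⟩ := Nat.mem_primeFactors.mp h
  have hgcd : Nat.gcd v w ^ 2 ∣ v * w := by
    rw [sq]; exact mul_dvd_mul (Nat.gcd_dvd_left v w) (Nat.gcd_dvd_right v w)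
  have hval : (v * w / Nat.gcd v w ^ 2).factorization p = 0 := by
    rw [Nat.factorization_div hgcd, Finsupp.tsub_apply, Nat.factorization_mul hv hw,
      Nat.factorization_pow, Nat.factorization_gcd hv hw]
    simp [heq]
    omega
  exact (hp.factorization_pos_of_dvd hne hdvd).ne' hval

end ExactPart

section Quality

noncomputable def primeWeight (τ : ℝ) (f g : ℕ → ℕ) (p : ℕ) : ℝ :=
  (p : ℝ) ^ (((f p : ℤ) - (g p : ℤ)).natAbs) *
    ((1 - (if f p = g p ∧ 1 ≤ f p then ((p : ℝ))⁻¹ else 0))⁻¹) ^ 2 *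
    ((1 - (p : ℝ) ^ (-1 - τ / 4))⁻¹) ^ 3

theorem qualityRaw_eq_mul_prod (τ : ℝ) (mu : ℕ → ℝ) (V W : Finset ℕ)
    (E : Finset (ℕ × ℕ)) (P : Finset ℕ) (f g : ℕ → ℕ) :
    qualityRaw τ mu V W E P f g = densityRaw mu V W E ^ (2 + τ) * muSet mu V * muSet mu W *
      ∏ p ∈ P, primeWeight τ f g p :=
  rfl

variable {τ : ℝ} {f g : ℕ → ℕ} {p : ℕ}

theorem one_le_inv_one_sub_rpow (hτ : 0 ≤ τ) (hp : p.Prime) :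
    1 ≤ (1 - (p : ℝ) ^ (-1 - τ / 4))⁻¹ := by
  have hp1 : (1 : ℝ) < p := by exact_mod_cast hp.one_lt
  have hlt : (p : ℝ) ^ (-1 - τ / 4) < 1 := Real.rpow_lt_one_of_one_lt_of_neg hp1 (by linarith)
  have hpos : 0 < (p : ℝ) ^ (-1 - τ / 4) := Real.rpow_pos_of_pos (by linarith) _
  exact one_le_inv₀ (by linarith) |>.mpr (by linarith)

theorem primeWeight_pos (hτ : 0 ≤ τ) (hp : p.Prime) : 0 < primeWeight τ f g p := by
  have hp1 : (1 : ℝ) < p := by exact_mod_cast hp.one_lt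
  have hind : (if f p = g p ∧ 1 ≤ f p then ((p : ℝ))⁻¹ else 0) < 1 := by
    split_ifs
    · exact inv_lt_one_of_one_lt₀ hp1
    · exact zero_lt_one
  have : 0 < (1 - (if f p = g p ∧ 1 ≤ f p then ((p : ℝ))⁻¹ else 0))⁻¹ :=
    inv_pos.mpr (by linarith)
  have := one_le_inv_one_sub_rpow hτ hp
  unfold primeWeight
  positivity

theorem pow_natAbs_le_primeWeight (hτ : 0 ≤ τ) (hp : p.Prime) (hfg : f p ≠ g p) :
    (p : ℝ) ^ ((f p : ℤ) - g p).natAbs ≤ primeWeight τ f g p := by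
  have := one_le_inv_one_sub_rpow hτ hp
  rw [primeWeight, if_neg (fun h => hfg h.1), sub_zero, inv_one, one_pow, mul_one]
  exact le_mul_of_one_le_right (by positivity) (one_le_pow₀ this)

theorem muSet_pos_of_density_pos {G : GCDGraph} (hδ : 0 < G.density) :
    0 < muSet G.mu G.V ∧ 0 < muSet G.mu G.W := by
  have hV := muSet_nonneg G.mu_nonneg G.V
  have hW := muSet_nonneg G.mu_nonneg G.W
  have hVW : 0 < muSet G.mu G.V * muSet G.mu G.W := by
    refine (mul_nonneg hV hW).lt_of_ne fun h => ?_
    simp [density, densityRaw, ← h] at hδ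
  exact ⟨pos_of_mul_pos_left hVW hW, pos_of_mul_pos_right hVW hV⟩

theorem quality_pos {G : GCDGraph} (hτ : 0 ≤ τ) (hδ : 0 < G.density) : 0 < quality τ G := by
  obtain ⟨hV, hW⟩ := muSet_pos_of_density_pos hδ
  have := prod_pos fun q hq => primeWeight_pos (f := G.f) (g := G.g) hτ (G.P_prime q hq)
  rw [quality, qualityRaw_eq_mul_prod]
  exact mul_pos (mul_pos (mul_pos (Real.rpow_pos_of_pos hδ _) hV) hW) this

end Quality

section PrimeSplitting

variable {τ M : ℝ} {G : GCDGraph} {p a b : ℕ}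

theorem density_rpow_mul_le_of_qualityAt_lt (hτ : 0 ≤ τ) (hp : p.Prime) (hpP : p ∉ G.P)
    (hab : a ≠ b) (hq : qualityAt τ G p a b < M * quality τ G) :
    densityRaw G.mu (exactPart G.V p a) (exactPart G.W p b) (edgesAt G p a b) ^ (2 + τ) *
        (muSet G.mu (exactPart G.V p a) * muSet G.mu (exactPart G.W p b)) *
        (p : ℝ) ^ ((a : ℤ) - b).natAbs
      ≤ M * (G.density ^ (2 + τ) * (muSet G.mu G.V * muSet G.mu G.W)) := by
  set f' := Function.update G.f p a
  set g' := Function.update G.g p b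
  set w₀ := ∏ q ∈ G.P, primeWeight τ G.f G.g q
  have hw₀ : 0 < w₀ := prod_pos fun q hq => primeWeight_pos hτ (G.P_prime q hq)
  have hprod : ∏ q ∈ insert p G.P, primeWeight τ f' g' q = primeWeight τ f' g' p * w₀ := by
    rw [prod_insert hpP]
    congr 1
    refine prod_congr rfl fun q hq => ?_
    have hqp : q ≠ p := fun h => hpP (h ▸ hq)
    simp only [primeWeight, f', g', Function.update_of_ne hqp]
  have hweight : (p : ℝ) ^ ((a : ℤ) - b).natAbs ≤ primeWeight τ f' g' p := by
    simpa [f', g'] using pow_natAbs_le_primeWeight (f := f') (g := g') hτ hp (by simpa [f', g'])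
  rw [qualityAt, qualityRaw_eq_mul_prod, hprod, quality, qualityRaw_eq_mul_prod] at hq
  set X := densityRaw G.mu (exactPart G.V p a) (exactPart G.W p b) (edgesAt G p a b) ^ (2 + τ) *
    muSet G.mu (exactPart G.V p a) * muSet G.mu (exactPart G.W p b)
  have hX : 0 ≤ X := by
    have := muEdges_nonneg G.mu_nonneg (edgesAt G p a b)
    have := muSet_nonneg G.mu_nonneg (exactPart G.V p a)
    have := muSet_nonneg G.mu_nonneg (exactPart G.W p b)
    simp only [X, densityRaw]
    positivity
  refine le_of_mul_le_mul_right ?_ hw₀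
  calc _ = X * ((p : ℝ) ^ ((a : ℤ) - b).natAbs * w₀) := by ring
    _ ≤ X * (primeWeight τ f' g' p * w₀) := by gcongr
    _ ≤ _ := hq.le
    _ = _ := by unfold density; ring

theorem muEdges_edgesAt_le (hτ : 0 ≤ τ) (hM : 1 ≤ M) (hV : 0 < muSet G.mu G.V)
    (hW : 0 < muSet G.mu G.W) (hp : p.Prime) (hpP : p ∉ G.P) (hab : a ≠ b)
    (hq : qualityAt τ G p a b < M * quality τ G) :
    muEdges G.mu (edgesAt G p a b) ≤ M * muEdges G.mu G.E *
      (muSet G.mu (exactPart G.V p a) / muSet G.mu G.V *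
        (muSet G.mu (exactPart G.W p b) / muSet G.mu G.W)) ^ (1 - (2 + τ)⁻¹) *
      ((p : ℝ) ^ (-(2 + τ)⁻¹)) ^ ((a : ℤ) - b).natAbs := by
  have hsub : edgesAt G p a b ⊆ exactPart G.V p a ×ˢ exactPart G.W p b := fun e he =>
    mem_product.mpr (mem_filter.mp he).2
  have h := le_mul_rpow_of_div_rpow_mul_le (by linarith) hM (muEdges_nonneg G.mu_nonneg G.E)
    (mul_pos hV hW) (muEdges_nonneg G.mu_nonneg _) (muEdges_le_muSet_mul_muSet G.mu_nonneg hsub)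
    (pow_pos (by exact_mod_cast hp.pos) _) (density_rpow_mul_le_of_qualityAt_lt hτ hp hpP hab hq)
  have hp0 : (0 : ℝ) ≤ p := Nat.cast_nonneg p
  have hpow : ((p : ℝ) ^ (-(2 + τ)⁻¹)) ^ ((a : ℤ) - b).natAbs
      = ((p : ℝ) ^ ((a : ℤ) - b).natAbs) ^ (-(2 + τ)⁻¹) := by
    rw [← Real.rpow_natCast, ← Real.rpow_natCast, ← Real.rpow_mul hp0, ← Real.rpow_mul hp0,
      mul_comm]
  rwa [div_mul_div_comm, hpow]

theorem muEdges_filter_mem_primeFactors_le_sum (hp : p.Prime) :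
    muEdges G.mu (G.E.filter fun e => p ∈ (e.1 * e.2 / Nat.gcd e.1 e.2 ^ 2).primeFactors) ≤
      ∑ ab ∈ ((G.V ∪ G.W).image (·.factorization p)).offDiag,
        muEdges G.mu (edgesAt G p ab.1 ab.2) := by
  set val : ℕ × ℕ → ℕ × ℕ := fun e => (e.1.factorization p, e.2.factorization p)
  have mem : ∀ e ∈ G.E, e.1 ∈ G.V ∧ e.2 ∈ G.W := fun e he => mem_product.mp (G.E_sub he)
  have hmaps : ∀ e ∈ G.E.filter (fun e => p ∈ (e.1 * e.2 / Nat.gcd e.1 e.2 ^ 2).primeFactors),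
      val e ∈ ((G.V ∪ G.W).image (·.factorization p)).offDiag := by
    intro e he
    obtain ⟨heE, hpe⟩ := mem_filter.mp he
    obtain ⟨hv, hw⟩ := mem e heE
    exact mem_offDiag.mpr ⟨mem_image_of_mem _ (mem_union_left _ hv),
      mem_image_of_mem _ (mem_union_right _ hw), factorization_ne_of_mem_primeFactors_div_gcd_sq
        (G.V_pos _ hv).ne' (G.W_pos _ hw).ne' hpe⟩
  rw [muEdges, ← sum_fiberwise_of_maps_to hmaps]
  refine sum_le_sum fun ab _ => sum_le_sum_of_subset_of_nonneg (fun e he => ?_)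
    fun e _ _ => mul_nonneg (G.mu_nonneg e.1) (G.mu_nonneg e.2)
  obtain ⟨heEp, rfl⟩ := mem_filter.mp he
  have heE := (mem_filter.mp heEp).1
  obtain ⟨hv, hw⟩ := mem e heE
  exact mem_filter.mpr ⟨heE, mem_exactPart_factorization hp hv (G.V_pos _ hv).ne',
    mem_exactPart_factorization hp hw (G.W_pos _ hw).ne'⟩

theorem muEdges_filter_mem_primeFactors_le (hτ : 0 ≤ τ) (hτ1 : τ ≤ 1) (hM : 1 ≤ M)
    {C : ℝ} (hC : 1 ≤ C) (hV : 0 < muSet G.mu G.V) (hW : 0 < muSet G.mu G.W) (hp : p.Prime)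
    (hp8 : 8 ≤ p) (hpP : p ∉ G.P) {k : ℕ}
    (hVk : 1 - C / p ≤ muSet G.mu (exactPart G.V p k) / muSet G.mu G.V)
    (hWk : 1 - C / p ≤ muSet G.mu (exactPart G.W p k) / muSet G.mu G.W)
    (hq : ∀ a b : ℕ, a ≠ b → qualityAt τ G p a b < M * quality τ G) :
    muEdges G.mu (G.E.filter fun e => p ∈ (e.1 * e.2 / Nat.gcd e.1 e.2 ^ 2).primeFactors) ≤
      12 * M * C ^ 2 / p * muEdges G.mu G.E := by
  set s := 2 + τ
  set r := (p : ℝ) ^ (-s⁻¹)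
  set I := (G.V ∪ G.W).image (·.factorization p)
  have hr : r ≤ 1 / 2 := rpow_neg_inv_le_half (by positivity) <| calc
    (2 : ℝ) ^ s ≤ 2 ^ (3 : ℝ) :=
      Real.rpow_le_rpow_of_exponent_le one_le_two (by simp [s]; linarith)
    _ ≤ p := by norm_num; exact_mod_cast hp8
  have frac_nonneg : ∀ S a, 0 ≤ muSet G.mu (exactPart S p a) / muSet G.mu S := fun S a =>
    div_nonneg (muSet_nonneg G.mu_nonneg _) (muSet_nonneg G.mu_nonneg _)
  have frac_le_one : ∀ S, 0 < muSet G.mu S →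
      muSet G.mu (exactPart S p k) / muSet G.mu S ≤ 1 :=
    fun S hS => div_le_one_of_le₀ (muSet_mono G.mu_nonneg (filter_subset _ _)) hS.le
  have hE := muEdges_nonneg G.mu_nonneg G.E
  calc _ ≤ ∑ ab ∈ I.offDiag, muEdges G.mu (edgesAt G p ab.1 ab.2) :=
        muEdges_filter_mem_primeFactors_le_sum hp
    _ ≤ ∑ ab ∈ I.offDiag, M * muEdges G.mu G.E *
          (muSet G.mu (exactPart G.V p ab.1) / muSet G.mu G.V *
            (muSet G.mu (exactPart G.W p ab.2) / muSet G.mu G.W)) ^ (1 - s⁻¹) *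
          r ^ ((ab.1 : ℤ) - ab.2).natAbs := sum_le_sum fun ab hab =>
        muEdges_edgesAt_le hτ hM hV hW hp hpP (mem_offDiag.mp hab).2.2
          (hq _ _ (mem_offDiag.mp hab).2.2)
    _ = M * muEdges G.mu G.E * ∑ ab ∈ I.offDiag,
          (muSet G.mu (exactPart G.V p ab.1) / muSet G.mu G.V *
            (muSet G.mu (exactPart G.W p ab.2) / muSet G.mu G.W)) ^ (1 - s⁻¹) *
          r ^ ((ab.1 : ℤ) - ab.2).natAbs := by
        rw [mul_sum]; exact sum_congr rfl fun _ _ => by ring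
    _ ≤ M * muEdges G.mu G.E *
          (4 * r * (2 * (C / p) ^ (1 - s⁻¹) + (C / p) ^ (2 * (1 - s⁻¹)))) := by
        gcongr
        refine sum_offDiag_rpow_mul_pow_natAbs_le k (frac_nonneg G.V) (frac_nonneg G.W)
          (frac_le_one G.V hV) (frac_le_one G.W hW)
          (sum_erase_muSet_exactPart_div_le G.mu_nonneg hV hVk I)
          (sum_erase_muSet_exactPart_div_le G.mu_nonneg hW hWk I) ?_ (by positivity) hr
        have : s⁻¹ ≤ 1 / 2 := by rw [one_div]; exact inv_anti₀ two_pos (by simp [s, hτ])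
        linarith
    _ ≤ M * muEdges G.mu G.E * (12 * C ^ 2 / p) := by
        gcongr
        exact four_mul_rpow_neg_inv_mul_add_le hC (by exact_mod_cast hp.one_le) (by simp [s, hτ])
    _ = 12 * M * C ^ 2 / p * muEdges G.mu G.E := by ring

theorem muEdges_filter_mem_primeFactors_le_of_mem_Rsharp (hτ0 : 0 < τ) (hτ1 : τ ≤ 1)
    (hM : 1 ≤ M) (hδ : 0 < G.density) (hpR : p ∈ Rsharp τ M G) (hpC6 : C6 τ M < p) :
    muEdges G.mu (G.E.filter fun e => p ∈ (e.1 * e.2 / Nat.gcd e.1 e.2 ^ 2).primeFactors) ≤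
      12 * M * C2 τ M ^ 2 / p * muEdges G.mu G.E := by
  obtain ⟨hV, hW⟩ := muSet_pos_of_density_pos hδ
  obtain ⟨⟨hp, hpP, -⟩, ⟨k, hVk, hWk⟩, hq⟩ := hpR
  have hp8 : (8 : ℝ) ≤ p := (eight_le_C6 hτ0 hτ1 hM).trans hpC6.le
  exact muEdges_filter_mem_primeFactors_le hτ0.le hτ1 hM (one_le_C2 hτ0 hτ1 hM) hV hW hp
    (by exact_mod_cast hp8) hpP hVk hWk hq

end PrimeSplitting

section RestrictEdges

def restrictEdges (G : GCDGraph) (E' : Finset (ℕ × ℕ)) (h : E' ⊆ G.E) : GCDGraph :=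
  { G with
    E := E'
    E_sub := h.trans G.E_sub
    gcd_exact := fun p hp e he => G.gcd_exact p hp e (h he) }

variable {τ : ℝ} {G : GCDGraph} {E' : Finset (ℕ × ℕ)}

theorem restrictEdges_isSubgraph (h : E' ⊆ G.E) : IsSubgraph (G.restrictEdges E' h) G :=
  ⟨rfl, subset_rfl, subset_rfl, h, subset_rfl, fun _ _ => rfl, fun _ _ => rfl⟩

theorem rpow_mul_quality_le_quality_restrictEdges (hτ : 0 ≤ τ) (h : E' ⊆ G.E) {c : ℝ}
    (hc : 0 ≤ c) (hE' : c * muEdges G.mu G.E ≤ muEdges G.mu E') :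
    c ^ (2 + τ) * quality τ G ≤ quality τ (G.restrictEdges E' h) := by
  have hV := muSet_nonneg G.mu_nonneg G.V
  have hW := muSet_nonneg G.mu_nonneg G.W
  have hw := (prod_pos fun q hq => primeWeight_pos (f := G.f) (g := G.g) hτ (G.P_prime q hq)).le
  have hδ : 0 ≤ G.density := div_nonneg (muEdges_nonneg G.mu_nonneg _) (mul_nonneg hV hW)
  have hδ' : c * G.density ≤ densityRaw G.mu G.V G.W E' := by
    rw [density, densityRaw, densityRaw, ← mul_div_assoc]
    exact div_le_div_of_nonneg_right hE' (mul_nonneg hV hW)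
  rw [quality, quality, qualityRaw_eq_mul_prod, qualityRaw_eq_mul_prod]
  calc c ^ (2 + τ) * (densityRaw G.mu G.V G.W G.E ^ (2 + τ) * muSet G.mu G.V * muSet G.mu G.W *
        ∏ p ∈ G.P, primeWeight τ G.f G.g p)
      = (c * G.density) ^ (2 + τ) * muSet G.mu G.V * muSet G.mu G.W *
          ∏ p ∈ G.P, primeWeight τ G.f G.g p := by
        rw [Real.mul_rpow hc hδ, density]; ring
    _ ≤ densityRaw G.mu G.V G.W E' ^ (2 + τ) * muSet G.mu G.V * muSet G.mu G.W *
          ∏ p ∈ G.P, primeWeight τ G.f G.g p := by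
        gcongr
    _ = _ := rfl

end RestrictEdges

section RareBadEdges

variable {τ M t U : ℝ} {G : GCDGraph}

theorem sum_mul_omegaFunRes_compl_le (hτ0 : 0 < τ) (hτ1 : τ ≤ 1) (hM : 1 ≤ M)
    (hδ : 0 < G.density) (ht : 1 ≤ Real.log t) (hflat : Rflat τ M G = ∅) :
    ∑ e ∈ G.E, G.mu e.1 * G.mu e.2 * (omegaFunRes (C6 τ M) t (R G)ᶜ e.1 e.2 : ℝ) ≤
      48 * M * C2 τ M ^ 2 * (2 + Real.log (Real.log t)) * muEdges G.mu G.E := by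
  classical
  set K := (Nat.primesLE ⌊t⌋₊).filter fun q : ℕ => C6 τ M < q ∧ (q : ℝ) ≤ t ∧ q ∈ R G
  set B : ℕ × ℕ → Finset ℕ := fun e =>
    (e.1 * e.2 / Nat.gcd e.1 e.2 ^ 2).primeFactors.filter
      fun q => C6 τ M < (q : ℝ) ∧ (q : ℝ) ≤ t ∧ q ∉ (R G)ᶜ
  have hB : ∀ e, omegaFunRes (C6 τ M) t (R G)ᶜ e.1 e.2 = #(B e) := fun e => by
    unfold omegaFunRes; convert rfl using 3
  have hBK : ∀ e ∈ G.E, B e ⊆ K := fun e _ q hq => by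
    obtain ⟨hqn, hqC6, hqt, hqR⟩ := mem_filter.mp hq
    exact mem_filter.mpr ⟨Nat.mem_primesLE.mpr
      ⟨Nat.le_floor hqt, Nat.prime_of_mem_primeFactors hqn⟩, hqC6, hqt, not_not.mp hqR⟩
  calc ∑ e ∈ G.E, G.mu e.1 * G.mu e.2 * (omegaFunRes (C6 τ M) t (R G)ᶜ e.1 e.2 : ℝ)
      = ∑ q ∈ K, ∑ e ∈ G.E with q ∈ B e, G.mu e.1 * G.mu e.2 := by
        simp only [hB]
        exact sum_mul_card_eq_sum_sum_filter _ _ _ _ hBK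
    _ ≤ ∑ q ∈ K, 12 * M * C2 τ M ^ 2 / q * muEdges G.mu G.E := by
        refine sum_le_sum fun q hq => ?_
        obtain ⟨-, hqC6, -, hqR⟩ := mem_filter.mp hq
        refine le_trans ?_ (muEdges_filter_mem_primeFactors_le_of_mem_Rsharp hτ0 hτ1 hM hδ
          (Set.sdiff_eq_empty.mp hflat hqR) hqC6)
        exact muEdges_mono G.mu_nonneg fun e he =>
          mem_filter.mpr ⟨(mem_filter.mp he).1, (mem_filter.mp (mem_filter.mp he).2).1⟩
    _ = 12 * M * C2 τ M ^ 2 * muEdges G.mu G.E * ∑ q ∈ K, (q : ℝ)⁻¹ := by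
        rw [mul_sum]; exact sum_congr rfl fun _ _ => by ring
    _ ≤ 12 * M * C2 τ M ^ 2 * muEdges G.mu G.E * (4 * (2 + Real.log (Real.log t))) := by
        have := muEdges_nonneg G.mu_nonneg G.E
        gcongr
        refine sum_inv_le_of_prime_le ht fun q hq => ?_
        obtain ⟨hqK, -, hqt, -⟩ := mem_filter.mp hq
        exact ⟨(Nat.mem_primesLE.mp hqK).2, hqt⟩
    _ = 48 * M * C2 τ M ^ 2 * (2 + Real.log (Real.log t)) * muEdges G.mu G.E := by ring

theorem le_muEdges_filter_omegaFunRes_compl_le (hτ0 : 0 < τ) (hτ1 : τ ≤ 1) (hM : 1 ≤ M)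
    (hδ : 0 < G.density) (ht : Real.exp (Real.exp (C6 τ M)) ≤ t)
    (hU : 2 * C6 τ M * Real.log (Real.log t) ≤ U) (hflat : Rflat τ M G = ∅) :
    9 / 10 * muEdges G.mu G.E ≤ muEdges G.mu
      (G.E.filter fun e => (omegaFunRes (C6 τ M) t (R G)ᶜ e.1 e.2 : ℝ) ≤ U / 4) := by
  set L := Real.log (Real.log t)
  set ω : ℕ × ℕ → ℝ := fun e => omegaFunRes (C6 τ M) t (R G)ᶜ e.1 e.2
  have hL : C6 τ M ≤ L := le_log_log_of_exp_exp_le ht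
  have hC6 := eight_le_C6 hτ0 hτ1 hM
  have hlog : 1 ≤ Real.log t := by
    have := Real.log_le_log (Real.exp_pos _) ht
    rw [Real.log_exp] at this
    linarith [Real.one_le_exp (by linarith : (0 : ℝ) ≤ C6 τ M)]
  have hweighted := sum_mul_omegaFunRes_compl_le hτ0 hτ1 hM hδ hlog hflat
  have hmarkov := mul_sum_filter_lt_le_sum_mul G.E (w := fun e => G.mu e.1 * G.mu e.2) (h := ω)
    (fun e _ => mul_nonneg (G.mu_nonneg _) (G.mu_nonneg _)) (fun e _ => Nat.cast_nonneg _) (U / 4)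
  have hsplit := sum_filter_add_sum_filter_not G.E (fun e => ω e ≤ U / 4)
    (fun e => G.mu e.1 * G.mu e.2)
  simp only [not_le] at hsplit
  have hconst : 10 * (48 * M * C2 τ M ^ 2 * (2 + L)) ≤ U / 4 := by
    have : 0 ≤ M * C2 τ M ^ 2 := by positivity
    have := mul_le_mul_of_nonneg_right (mul_C2_sq_le_C6 (τ := τ) hM) (by linarith : 0 ≤ L)
    nlinarith
  have hU0 : 0 < U / 4 := by nlinarith
  have hE := muEdges_nonneg G.mu_nonneg G.E
  have hbad : 10 * ∑ e ∈ G.E with U / 4 < ω e, G.mu e.1 * G.mu e.2 ≤ muEdges G.mu G.E := by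
    refine le_of_mul_le_mul_left ?_ hU0
    calc U / 4 * (10 * ∑ e ∈ G.E with U / 4 < ω e, G.mu e.1 * G.mu e.2)
        ≤ 10 * (48 * M * C2 τ M ^ 2 * (2 + L) * muEdges G.mu G.E) := by linarith
      _ ≤ U / 4 * muEdges G.mu G.E := by nlinarith
  unfold muEdges at hbad ⊢
  linarith

end RareBadEdges

end GCDGraph

theorem cosmetic_omega_general (τ M : ℝ) (hτ : τ ∈ Set.Ioo (0 : ℝ) (1 / 100)) (hM : 2 ≤ M)
    (G : GCDGraph) (hδ : 0 < G.density)
    (t U : ℝ) (ht : Real.exp (Real.exp (C6 τ M)) ≤ t)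
    (hU : 2 * C6 τ M * Real.log (Real.log t) ≤ U)
    (hflat : Rflat τ M G = ∅)
    (hE : ∀ e ∈ G.E, U ≤ (omegaFun t e.1 e.2 : ℝ)) :
    ∃ G' : GCDGraph, IsSubgraph G' G ∧
      G'.V = G.V ∧ G'.W = G.W ∧ G'.E ⊆ G.E ∧ G'.P = G.P ∧ G'.f = G.f ∧ G'.g = G.g ∧
      quality τ G / 2 ≤ quality τ G' ∧ 0 < quality τ G / 2 ∧
      ∀ e ∈ G'.E, U / 2 ≤ (omegaFunRes (C6 τ M) t (R G) e.1 e.2 : ℝ) := by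
  obtain ⟨hτ0, hτ1⟩ := hτ
  replace hτ1 : τ ≤ 1 := by linarith
  have hM1 : 1 ≤ M := by linarith
  have hC6 := eight_le_C6 hτ0 hτ1 hM1
  have hL := le_log_log_of_exp_exp_le ht
  -- `omegaFunRes c t (R G)ᶜ` counts the prime factors of `vw / gcd(v, w)²` in `R(G) ∩ (c, t]`
  set E' := G.E.filter fun e => (omegaFunRes (C6 τ M) t (R G)ᶜ e.1 e.2 : ℝ) ≤ U / 4
  have hE' : E' ⊆ G.E := filter_subset _ _
  have hq := quality_pos hτ0.le hδ
  refine ⟨G.restrictEdges E' hE', restrictEdges_isSubgraph hE', rfl, rfl, hE', rfl, rfl, rfl,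
    ?_, half_pos hq, fun e he => ?_⟩
  · have half_le : (1 / 2 : ℝ) ≤ (9 / 10) ^ (2 + τ) := calc
      (1 / 2 : ℝ) ≤ (9 / 10) ^ (3 : ℝ) := by norm_num
      _ ≤ (9 / 10) ^ (2 + τ) := Real.rpow_le_rpow_of_exponent_ge (by norm_num) (by norm_num)
          (by linarith)
    calc quality τ G / 2 ≤ (9 / 10) ^ (2 + τ) * quality τ G := by nlinarith
      _ ≤ _ := rpow_mul_quality_le_quality_restrictEdges hτ0.le hE' (by norm_num)
          (le_muEdges_filter_omegaFunRes_compl_le hτ0 hτ1 hM1 hδ ht hU hflat)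
  · have hsplit := omegaFun_le_add_omegaFunRes (by linarith : 0 ≤ C6 τ M) t (R G) e.1 e.2
    have hbad := (mem_filter.mp he).2
    have := hE e (hE' he)
    nlinarith

/-- Removing the effect of `R(G)` from `ω_t(v,w)` (`Cosmetic-ω`). -/
theorem cosmetic_omega (τ M : ℝ) (hτ : τ ∈ Set.Ioo (0 : ℝ) (1 / 100)) (hM : 2 ≤ M)
    (G : GCDGraph) (hmax : IsMaximal τ G) (hδ : 0 < G.density)
    (t U : ℝ) (ht : Real.exp (Real.exp (C6 τ M)) ≤ t)
    (hU : 2 * C6 τ M * Real.log (Real.log t) ≤ U)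
    (hflat : Rflat τ M G = ∅)
    (hE : ∀ e ∈ G.E, U ≤ (omegaFun t e.1 e.2 : ℝ)) :
    ∃ G' : GCDGraph, IsSubgraph G' G ∧
      G'.V = G.V ∧ G'.W = G.W ∧ G'.E ⊆ G.E ∧ G'.P = G.P ∧ G'.f = G.f ∧ G'.g = G.g ∧
      quality τ G / 2 ≤ quality τ G' ∧ 0 < quality τ G / 2 ∧
      ∀ e ∈ G'.E, U / 2 ≤ (omegaFunRes (C6 τ M) t (R G) e.1 e.2 : ℝ) :=
  cosmetic_omega_general τ M hτ hM G hδ t U ht hU hflat hE
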